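/- arXiv:2401.17963 — 5 statements merged into one kernel-verified Lean document; each statement's English description precedes it below -/
import Mathlib

section
/- If a Markov kernel P on a measurable space X with invariant probability measure Π satisfies the drift condition (PV)(x) - V(x) ≤ -(1-γ) f(x) + K for all x, where V: X → [1,∞), f: X → [1,∞), γ ∈ (0,1), K ∈ (0,∞), then ∫ f dΠ ≤ K/(1-γ). -/
/-!
Integrating the drift inequality against the invariant measure `π` turns `∫ PV dπ` into `∫ V dπ`,
which would cancel and leave `(1 - γ) ∫ f dπ ≤ K`, were it not that `∫ V dπ` may be infinite.
The truncation `min V n` still satisfies a drift inequality, with `f` replaced by its restriction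
to the level set `{V ≤ n}`, and it is bounded, so the cancellation is legitimate there; letting
`n → ∞` by monotone convergence gives the bound.
-/

open MeasureTheory ProbabilityTheory
open scoped ENNReal

section Drift

variable {𝓧 : Type*} [MeasurableSpace 𝓧] {P : Kernel 𝓧 𝓧} {π : Measure 𝓧}
  {W g : 𝓧 → ℝ≥0∞} {c : ℝ≥0∞}

theorem lintegral_le_of_invariant_of_drift_of_lintegral_ne_top [IsProbabilityMeasure π]
    (hinv : π.bind (fun x => P x) = π) (hW : Measurable W) (hW_fin : ∫⁻ x, W x ∂π ≠ ⊤)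
    (hdrift : ∀ x, ∫⁻ y, W y ∂(P x) + g x ≤ W x + c) :
    ∫⁻ x, g x ∂π ≤ c := by
  have hPW : ∫⁻ x, ∫⁻ y, W y ∂(P x) ∂π = ∫⁻ x, W x ∂π := by
    conv_rhs => rw [← hinv]
    exact (Measure.lintegral_bind P.measurable.aemeasurable hW.aemeasurable).symm
  have h := lintegral_mono (μ := π) hdrift
  rw [lintegral_add_left (hW.lintegral_kernel), hPW, lintegral_add_right _ measurable_const,
    lintegral_const, measure_univ, mul_one] at h
  exact (ENNReal.add_le_add_iff_left hW_fin).mp h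

theorem lintegral_min_add_indicator_le_of_drift [IsMarkovKernel P]
    (hdrift : ∀ x, ∫⁻ y, W y ∂(P x) + g x ≤ W x + c) (n : ℝ≥0∞) (x : 𝓧) :
    ∫⁻ y, min (W y) n ∂(P x) + {y | W y ≤ n}.indicator g x ≤ min (W x) n + c := by
  by_cases hx : x ∈ {y | W y ≤ n}
  · rw [Set.indicator_of_mem hx, min_eq_left hx]
    calc ∫⁻ y, min (W y) n ∂(P x) + g x ≤ ∫⁻ y, W y ∂(P x) + g x := by
          gcongr with y; exact min_le_left _ _
      _ ≤ W x + c := hdrift x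
  · rw [Set.indicator_of_notMem hx, add_zero, min_eq_right (not_le.mp hx).le]
    calc ∫⁻ y, min (W y) n ∂(P x) ≤ ∫⁻ _, n ∂(P x) := lintegral_mono fun y => min_le_right _ _
      _ = n := by simp
      _ ≤ n + c := le_self_add

theorem lintegral_le_of_invariant_of_drift [IsMarkovKernel P] [IsProbabilityMeasure π]
    (hinv : π.bind (fun x => P x) = π) (hW : Measurable W) (hW_ne_top : ∀ x, W x ≠ ⊤)
    (hdrift : ∀ x, ∫⁻ y, W y ∂(P x) + g x ≤ W x + c) :
    ∫⁻ x, g x ∂π ≤ c := by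
  have hlevel : ∀ n : ℕ, ∫⁻ x in {x | W x ≤ n}, g x ∂π ≤ c := fun n => by
    rw [← lintegral_indicator (measurableSet_le hW measurable_const)]
    have hfin : ∫⁻ x, min (W x) n ∂π ≠ ⊤ :=
      ne_top_of_le_ne_top (by simp) (lintegral_mono fun x => min_le_right (W x) n)
    exact lintegral_le_of_invariant_of_drift_of_lintegral_ne_top hinv
      (hW.min measurable_const) hfin (lintegral_min_add_indicator_le_of_drift hdrift n)
  have hunion : ⋃ n : ℕ, {x | W x ≤ n} = Set.univ :=
    Set.eq_univ_of_forall fun x =>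
      Set.mem_iUnion.mpr ((ENNReal.exists_nat_gt (hW_ne_top x)).imp fun _ => le_of_lt)
  have hmono : Monotone fun n : ℕ => {x | W x ≤ n} := fun m n hmn x (hx : W x ≤ m) =>
    le_trans hx (Nat.cast_le.mpr hmn)
  calc ∫⁻ x, g x ∂π = π.withDensity g (⋃ n : ℕ, {x | W x ≤ n}) := by
        rw [hunion, withDensity_apply _ MeasurableSet.univ, Measure.restrict_univ]
    _ = ⨆ n : ℕ, ∫⁻ x in {x | W x ≤ n}, g x ∂π := by
        rw [hmono.measure_iUnion]
        simp_rw [withDensity_apply _ (measurableSet_le hW measurable_const)]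
    _ ≤ c := iSup_le hlevel

end Drift

theorem drift_implies_f_integrable_general
    {𝓧 : Type*} [MeasurableSpace 𝓧]
    (P : Kernel 𝓧 𝓧) [IsMarkovKernel P]
    (π : Measure 𝓧) [IsProbabilityMeasure π]
    (hinv : π.bind (fun x => P x) = π)
    (V f : 𝓧 → ℝ) (hV : Measurable V)
    (hV1 : ∀ x, 1 ≤ V x) (hf1 : ∀ x, 1 ≤ f x)
    (γ K : ℝ) (hγ : γ ∈ Set.Ioo (0:ℝ) 1) (hK : 0 < K)
    (hVint : ∀ x, Integrable V (P x))
    (hdrift : ∀ x, (∫ y, V y ∂(P x)) - V x ≤ -(1 - γ) * f x + K) :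
    ∫⁻ x, ENNReal.ofReal (f x) ∂π ≤ ENNReal.ofReal (K / (1 - γ)) := by
  have h1γ : 0 < 1 - γ := sub_pos.mpr hγ.2
  have hV0 : ∀ x, 0 ≤ V x := fun x => zero_le_one.trans (hV1 x)
  have hdrift_ennreal : ∀ x, ∫⁻ y, ENNReal.ofReal (V y) ∂(P x) + ENNReal.ofReal ((1 - γ) * f x)
      ≤ ENNReal.ofReal (V x) + ENNReal.ofReal K := fun x => by
    rw [← ofReal_integral_eq_lintegral_ofReal (hVint x) (ae_of_all _ hV0),
      ← ENNReal.ofReal_add (integral_nonneg hV0)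
        (mul_nonneg h1γ.le (zero_le_one.trans (hf1 x))),
      ← ENNReal.ofReal_add (hV0 x) hK.le]
    exact ENNReal.ofReal_le_ofReal (by linarith [hdrift x])
  have h := lintegral_le_of_invariant_of_drift hinv hV.ennreal_ofReal
    (fun _ => ENNReal.ofReal_ne_top) hdrift_ennreal
  simp_rw [ENNReal.ofReal_mul h1γ.le] at h
  rw [lintegral_const_mul' _ _ ENNReal.ofReal_ne_top] at h
  rw [ENNReal.ofReal_div_of_pos h1γ, ENNReal.le_div_iff_mul_le
    (Or.inl (ENNReal.ofReal_pos.mpr h1γ).ne') (Or.inl ENNReal.ofReal_ne_top), mul_comm]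
  exact h

/-- Under a drift condition `(PV)(x) - V(x) ≤ -(1-γ) f(x) + K` for a Markov kernel `P`
with invariant probability measure `π`, we have `∫ f dπ ≤ K/(1-γ)`. -/
theorem drift_implies_f_integrable
    {𝓧 : Type*} [MeasurableSpace 𝓧]
    (P : Kernel 𝓧 𝓧) [IsMarkovKernel P]
    (π : Measure 𝓧) [IsProbabilityMeasure π]
    (hinv : π.bind (fun x => P x) = π)
    (V f : 𝓧 → ℝ) (hV : Measurable V) (hf : Measurable f)
    (hV1 : ∀ x, 1 ≤ V x) (hf1 : ∀ x, 1 ≤ f x)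
    (γ K : ℝ) (hγ : γ ∈ Set.Ioo (0:ℝ) 1) (hK : 0 < K)
    (hVint : ∀ x, Integrable V (P x))
    (hdrift : ∀ x, (∫ y, V y ∂(P x)) - V x ≤ -(1 - γ) * f x + K) :
    ∫⁻ x, ENNReal.ofReal (f x) ∂π ≤ ENNReal.ofReal (K / (1 - γ)) :=
  drift_implies_f_integrable_general P π hinv V f hV hV1 hf1 γ K hγ hK hVint hdrift
end

section
/- Under the drift condition (PV)(x) - V(x) ≤ -(1-γ) f(x) + K with V, f ≥ 1 and R > K/(1-γ), set C = {x : f(x) ≤ R} and γ_R = γ + K/R. Then for every x ∈ C, E[Σ_{k=1}^{τ_C} f(X_k) | X_0 = x] ≤ (V(x) - 1 - (1-γ) f(x) + 2K)/(1 - γ_R), where τ_C = inf{t ≥ 1 : X_t ∈ C} is the first return time to C. -/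
open MeasureTheory ProbabilityTheory
open scoped ENNReal

/-!
With `W = V - 1 ≥ 0` and `a = 1 - γ_R`, the drift condition gives `PW + a f ≤ W + K 1_C`
pointwise: off `C` we have `f > R`, and `(K / R) f` absorbs the constant `K`. By the Markov
property, `Φ n = E[W(X_{n+1}); τ_C > n] + K P(τ_C > n)` then satisfies
`Φ (n+1) + a E[f(X_{n+1}); τ_C > n] ≤ Φ n`, and telescoping gives
`a E[Σ_{k=1}^{τ_C} f(X_k)] ≤ Φ 0 = PW(x) + K ≤ V(x) - 1 - (1 - γ) f(x) + 2K`.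
-/

theorem ENNReal.tsum_le_of_add_le_of_succ {Φ c : ℕ → ℝ≥0∞} (h : ∀ n, Φ (n + 1) + c n ≤ Φ n) :
    ∑' n, c n ≤ Φ 0 := by
  have hpartial : ∀ N, Φ N + ∑ n ∈ Finset.range N, c n ≤ Φ 0 := by
    intro N
    induction N with
    | zero => simp
    | succ N ih =>
      calc Φ (N + 1) + ∑ n ∈ Finset.range (N + 1), c n
          = (Φ (N + 1) + c N) + ∑ n ∈ Finset.range N, c n := by
            rw [Finset.sum_range_succ]; ring
        _ ≤ Φ N + ∑ n ∈ Finset.range N, c n := by gcongr; exact h N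
        _ ≤ Φ 0 := ih
  exact ENNReal.tsum_le_of_sum_range_le fun N => le_add_self.trans (hpartial N)

namespace MeasureTheory

theorem ae_comp_eq_of_measure_eq_one {Ω α : Type*} [MeasurableSpace Ω]
    {ν : Measure Ω} [IsProbabilityMeasure ν] {X : Ω → α} {x : α} (hX : ν {ω | X ω = x} = 1)
    {g : α → ℝ≥0∞} (hg : Measurable (g ∘ X)) : ∀ᵐ ω ∂ν, g (X ω) = g x := by
  have hmeas : MeasurableSet {ω | g (X ω) = g x} := measurableSet_eq_fun hg measurable_const
  refine (ae_iff_measure_eq hmeas.nullMeasurableSet).2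
    (le_antisymm (measure_mono (Set.subset_univ _)) ?_)
  rw [measure_univ, ← hX]
  exact measure_mono fun ω (hω : X ω = x) => by simp [hω]

variable {α : Type*} [MeasurableSpace α] {μ : Measure α} [IsProbabilityMeasure μ] {V : α → ℝ}

theorem one_le_integral_of_one_le (hV : Integrable V μ) (hV1 : ∀ x, 1 ≤ V x) :
    1 ≤ ∫ x, V x ∂μ := by
  simpa using integral_mono (integrable_const 1) hV hV1

theorem lintegral_ofReal_sub_one (hV : Integrable V μ) (hV1 : ∀ x, 1 ≤ V x) :
    ∫⁻ x, ENNReal.ofReal (V x - 1) ∂μ = ENNReal.ofReal (∫ x, V x ∂μ - 1) := by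
  rw [← ofReal_integral_eq_lintegral_ofReal (f := fun x => V x - 1) (hV.sub (integrable_const 1))
    (ae_of_all _ fun x => sub_nonneg.2 (hV1 x)), integral_sub hV (integrable_const 1)]
  simp

end MeasureTheory

namespace MarkovChain

variable {𝓧 : Type*} {C : Set 𝓧}

/-- The event `τ_C > n`, where `τ_C = inf {t ≥ 1 | ω t ∈ C}` is the first return time to `C`. -/
def avoidsUpTo (C : Set 𝓧) (n : ℕ) : Set (ℕ → 𝓧) := {ω | ∀ j ∈ Finset.Icc 1 n, ω j ∉ C}

@[simp]
theorem avoidsUpTo_zero : avoidsUpTo C 0 = Set.univ := by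
  ext ω; simp [avoidsUpTo]

theorem avoidsUpTo_succ (n : ℕ) :
    avoidsUpTo C (n + 1) = avoidsUpTo C n \ (fun ω => ω (n + 1)) ⁻¹' C := by
  ext ω
  simp only [avoidsUpTo, Finset.mem_Icc, Set.mem_sdiff, Set.mem_ofPred_eq, Set.mem_preimage]
  constructor
  · intro h; exact ⟨fun j hj => h j ⟨hj.1, by omega⟩, h _ ⟨by omega, le_rfl⟩⟩
  · rintro ⟨h, hn⟩ j hj
    rcases hj.2.lt_or_eq with hlt | rfl
    · exact h j ⟨hj.1, by omega⟩
    · exact hn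

variable [MeasurableSpace 𝓧]

/-- Conditionally on `ω 0, …, ω n`, the coordinate `ω (n + 1)` has law `P (ω n)` under `ν`. -/
def HasMarkovProperty (P : Kernel 𝓧 𝓧) (ν : Measure (ℕ → 𝓧)) : Prop :=
  ∀ (n : ℕ) (g : 𝓧 → ℝ≥0∞), Measurable g → ∀ s : Set (ℕ → 𝓧),
    MeasurableSet[MeasurableSpace.comap (fun ω (i : Fin (n+1)) => ω i) inferInstance] s →
    ∫⁻ ω in s, g (ω (n+1)) ∂ν = ∫⁻ ω in s, (∫⁻ y, g y ∂(P (ω n))) ∂ν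

theorem measurableSet_comap_avoidsUpTo (hC : MeasurableSet C) (n : ℕ) :
    MeasurableSet[MeasurableSpace.comap (fun ω (i : Fin (n+1)) => ω i) inferInstance]
      (avoidsUpTo C n) := by
  refine ⟨{v | ∀ i : Fin (n + 1), 1 ≤ (i : ℕ) → v i ∉ C}, ?_, ?_⟩
  · simp only [Set.ofPred_forall]
    exact .iInter fun i => .iInter fun _ => hC.compl.preimage (measurable_pi_apply i)
  · ext ω
    simp only [Set.mem_preimage, Set.mem_ofPred_eq, avoidsUpTo, Finset.mem_Icc]
    exact ⟨fun h j hj => h ⟨j, by omega⟩ hj.1, fun h i hi => h i ⟨hi, by omega⟩⟩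

theorem measurableSet_avoidsUpTo (hC : MeasurableSet C) (n : ℕ) :
    MeasurableSet (avoidsUpTo C n) :=
  (measurable_pi_lambda _ fun _ => measurable_pi_apply _).comap_le _
    (measurableSet_comap_avoidsUpTo hC n)

theorem lintegral_tsum_indicator_returnTime (hC : MeasurableSet C) {g : 𝓧 → ℝ≥0∞}
    (hg : Measurable g) (ν : Measure (ℕ → 𝓧)) :
    ∫⁻ ω, (∑' k : ℕ, {ω' : ℕ → 𝓧 | 1 ≤ k ∧ ∀ j, 1 ≤ j → j < k → ω' j ∉ C}.indicator
        (fun ω' => g (ω' k)) ω) ∂ν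
      = ∑' n, ∫⁻ ω in avoidsUpTo C n, g (ω (n + 1)) ∂ν := by
  have hset (n : ℕ) :
      {ω' : ℕ → 𝓧 | 1 ≤ n + 1 ∧ ∀ j, 1 ≤ j → j < n + 1 → ω' j ∉ C} = avoidsUpTo C n := by
    ext ω
    simp only [Set.mem_ofPred_eq, avoidsUpTo, Finset.mem_Icc]
    exact ⟨fun h j hj => h.2 j hj.1 (by omega),
      fun h => ⟨by omega, fun j hj _ => h j ⟨hj, by omega⟩⟩⟩
  have hterm (ω : ℕ → 𝓧) :
      ∑' k : ℕ, {ω' : ℕ → 𝓧 | 1 ≤ k ∧ ∀ j, 1 ≤ j → j < k → ω' j ∉ C}.indicator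
        (fun ω' => g (ω' k)) ω
      = ∑' n, (avoidsUpTo C n).indicator (fun ω' => g (ω' (n + 1))) ω := by
    rw [tsum_eq_zero_add' ENNReal.summable]
    simp only [hset]
    simp
  simp_rw [hterm]
  refine (lintegral_tsum fun n => ?_).trans ?_
  · exact ((hg.comp (measurable_pi_apply _)).indicator
      (measurableSet_avoidsUpTo hC n)).aemeasurable
  · simp_rw [lintegral_indicator (measurableSet_avoidsUpTo hC _)]

variable {P : Kernel 𝓧 𝓧} {ν : Measure (ℕ → 𝓧)} {W c : 𝓧 → ℝ≥0∞} {b : ℝ≥0∞}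

theorem HasMarkovProperty.setLIntegral_avoidsUpTo (hν : HasMarkovProperty P ν)
    (hC : MeasurableSet C) (hW : Measurable W) (n : ℕ) :
    ∫⁻ ω in avoidsUpTo C n, W (ω (n + 1)) ∂ν
      = ∫⁻ ω in avoidsUpTo C n, ∫⁻ y, W y ∂(P (ω n)) ∂ν :=
  hν n W hW _ (measurableSet_comap_avoidsUpTo hC n)

theorem HasMarkovProperty.potential_succ_add_le (hν : HasMarkovProperty P ν)
    (hC : MeasurableSet C) (hW : Measurable W)
    (hdrift : ∀ y, ∫⁻ z, W z ∂(P y) + c y ≤ W y + C.indicator (fun _ => b) y) (n : ℕ) :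
    (∫⁻ ω in avoidsUpTo C (n + 1), W (ω (n + 2)) ∂ν + b * ν (avoidsUpTo C (n + 1)))
        + ∫⁻ ω in avoidsUpTo C n, c (ω (n + 1)) ∂ν
      ≤ ∫⁻ ω in avoidsUpTo C n, W (ω (n + 1)) ∂ν + b * ν (avoidsUpTo C n) := by
  set S := avoidsUpTo C n
  set T : Set (ℕ → 𝓧) := (fun ω => ω (n + 1)) ⁻¹' C
  have hT : MeasurableSet T := hC.preimage (measurable_pi_apply _)
  have hPW : Measurable fun ω : ℕ → 𝓧 => ∫⁻ z, W z ∂(P (ω (n + 1))) :=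
    hW.lintegral_kernel.comp (measurable_pi_apply _)
  have hWX : Measurable fun ω : ℕ → 𝓧 => W (ω (n + 1)) := hW.comp (measurable_pi_apply _)
  have hsplit : ν (S ∩ T) + ν (avoidsUpTo C (n + 1)) = ν S := by
    rw [avoidsUpTo_succ]; exact measure_inter_add_sdiff S hT
  have hind : ∫⁻ ω in S, C.indicator (fun _ => b) (ω (n + 1)) ∂ν = b * ν (S ∩ T) := by
    have hcomp (ω : ℕ → 𝓧) :
        C.indicator (fun _ => b) (ω (n + 1)) = T.indicator (fun _ => b) ω :=
      (Set.indicator_comp_right _).symm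
    simp_rw [hcomp]
    rw [lintegral_indicator_const hT, Measure.restrict_apply hT, Set.inter_comm]
  calc (∫⁻ ω in avoidsUpTo C (n + 1), W (ω (n + 2)) ∂ν + b * ν (avoidsUpTo C (n + 1)))
        + ∫⁻ ω in S, c (ω (n + 1)) ∂ν
      = ∫⁻ ω in avoidsUpTo C (n + 1), ∫⁻ z, W z ∂(P (ω (n + 1))) ∂ν
          + ∫⁻ ω in S, c (ω (n + 1)) ∂ν + b * ν (avoidsUpTo C (n + 1)) := by
        rw [hν.setLIntegral_avoidsUpTo hC hW (n + 1)]; ring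
    _ ≤ ∫⁻ ω in S, ∫⁻ z, W z ∂(P (ω (n + 1))) ∂ν
          + ∫⁻ ω in S, c (ω (n + 1)) ∂ν + b * ν (avoidsUpTo C (n + 1)) := by
        gcongr ?_ + _ + _
        exact lintegral_mono_set ((avoidsUpTo_succ n).trans_le Set.sdiff_subset)
    _ = ∫⁻ ω in S, (∫⁻ z, W z ∂(P (ω (n + 1))) + c (ω (n + 1))) ∂ν
          + b * ν (avoidsUpTo C (n + 1)) := by
        rw [lintegral_add_left hPW]
    _ ≤ ∫⁻ ω in S, (W (ω (n + 1)) + C.indicator (fun _ => b) (ω (n + 1))) ∂ν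
          + b * ν (avoidsUpTo C (n + 1)) := by
        gcongr ?_ + _
        exact lintegral_mono fun ω => hdrift _
    _ = ∫⁻ ω in S, W (ω (n + 1)) ∂ν + b * ν S := by
        rw [lintegral_add_left hWX, hind, add_assoc, ← mul_add, hsplit]

theorem HasMarkovProperty.tsum_setLIntegral_avoidsUpTo_le (hν : HasMarkovProperty P ν)
    (hC : MeasurableSet C) (hW : Measurable W)
    (hdrift : ∀ y, ∫⁻ z, W z ∂(P y) + c y ≤ W y + C.indicator (fun _ => b) y) :
    ∑' n, ∫⁻ ω in avoidsUpTo C n, c (ω (n + 1)) ∂ν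
      ≤ ∫⁻ ω, ∫⁻ y, W y ∂(P (ω 0)) ∂ν + b * ν Set.univ := by
  have hstart := hν.setLIntegral_avoidsUpTo hC hW 0
  have hsum := ENNReal.tsum_le_of_add_le_of_succ (hν.potential_succ_add_le hC hW hdrift)
  simp only [avoidsUpTo_zero, Measure.restrict_univ, zero_add] at hstart hsum
  rwa [← hstart]

theorem lintegral_sub_one_add_le_of_drift [IsMarkovKernel P] {V f : 𝓧 → ℝ} {γ K R : ℝ} {y : 𝓧}
    (hVint : Integrable V (P y)) (hV1 : ∀ x, 1 ≤ V x) (hfy : 0 ≤ f y) (hK : 0 ≤ K) (hR : 0 < R)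
    (ha : 0 ≤ 1 - (γ + K / R)) (hdrift : (∫ z, V z ∂(P y)) - V y ≤ -(1 - γ) * f y + K) :
    ∫⁻ z, ENNReal.ofReal (V z - 1) ∂(P y)
        + ENNReal.ofReal (1 - (γ + K / R)) * ENNReal.ofReal (f y)
      ≤ ENNReal.ofReal (V y - 1) + {x | f x ≤ R}.indicator (fun _ => ENNReal.ofReal K) y := by
  have hPV := one_le_integral_of_one_le hVint hV1
  rw [lintegral_ofReal_sub_one hVint hV1, ← ENNReal.ofReal_mul ha,
    ← ENNReal.ofReal_add (by linarith) (mul_nonneg ha hfy)]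
  by_cases hy : f y ≤ R
  · rw [Set.indicator_of_mem (show y ∈ {x | f x ≤ R} from hy),
      ← ENNReal.ofReal_add (by linarith [hV1 y]) hK]
    have : 0 ≤ K / R * f y := mul_nonneg (div_nonneg hK hR.le) hfy
    exact ENNReal.ofReal_le_ofReal (by linarith)
  · rw [Set.indicator_of_notMem (show y ∉ {x | f x ≤ R} from hy), add_zero]
    have : K ≤ K / R * f y := by
      rw [div_mul_eq_mul_div, le_div_iff₀ hR]
      exact mul_le_mul_of_nonneg_left (not_le.1 hy).le hK
    exact ENNReal.ofReal_le_ofReal (by linarith)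

end MarkovChain

open MarkovChain in
theorem drift_return_time_sum_bound_general
    {𝓧 : Type*} [MeasurableSpace 𝓧]
    (P : Kernel 𝓧 𝓧) [IsMarkovKernel P]
    (Pr : 𝓧 → Measure (ℕ → 𝓧)) (hprob : ∀ x, IsProbabilityMeasure (Pr x))
    (hstart : ∀ x, (Pr x) {ω | ω 0 = x} = 1)
    (hMarkov : ∀ (x : 𝓧) (n : ℕ) (g : 𝓧 → ENNReal), Measurable g →
      ∀ s : Set (ℕ → 𝓧),
        MeasurableSet[MeasurableSpace.comap (fun ω (i : Fin (n+1)) => ω i) inferInstance] s →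
        ∫⁻ ω in s, g (ω (n+1)) ∂(Pr x) = ∫⁻ ω in s, (∫⁻ y, g y ∂(P (ω n))) ∂(Pr x))
    (V f : 𝓧 → ℝ) (hV : Measurable V) (hf : Measurable f)
    (hV1 : ∀ x, 1 ≤ V x) (hf1 : ∀ x, 1 ≤ f x)
    (γ K R : ℝ) (hγ : γ ∈ Set.Ioo (0:ℝ) 1) (hK : 0 < K) (hR : K / (1 - γ) < R)
    (hVint : ∀ x, Integrable V (P x))
    (hdrift : ∀ x, (∫ y, V y ∂(P x)) - V x ≤ -(1 - γ) * f x + K)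
    (C : Set 𝓧) (hC : C = {x | f x ≤ R})
    (x : 𝓧) :
    ∫⁻ ω, (∑' k : ℕ,
        Set.indicator {ω' : ℕ → 𝓧 | 1 ≤ k ∧ ∀ j, 1 ≤ j → j < k → ω' j ∉ C}
          (fun ω' => ENNReal.ofReal (f (ω' k))) ω) ∂(Pr x)
      ≤ ENNReal.ofReal ((V x - 1 - (1 - γ) * f x + 2 * K) / (1 - (γ + K / R))) := by
  subst hC
  have hR0 : 0 < R := (div_nonneg hK.le (by linarith [hγ.2])).trans_lt hR
  have ha : 0 < 1 - (γ + K / R) := by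
    have hKR := (div_lt_iff₀ (by linarith [hγ.2] : 0 < 1 - γ)).1 hR
    have : K / R < 1 - γ := (div_lt_iff₀ hR0).2 (by linarith)
    linarith
  have hCm : MeasurableSet {x | f x ≤ R} := hf measurableSet_Iic
  have hW : Measurable fun y => ENNReal.ofReal (V y - 1) := (hV.sub_const 1).ennreal_ofReal
  have := hprob x
  have hsum := HasMarkovProperty.tsum_setLIntegral_avoidsUpTo_le (hMarkov x) hCm hW fun y =>
    lintegral_sub_one_add_le_of_drift (hVint y) hV1 (by linarith [hf1 y]) hK.le hR0 ha.le (hdrift y)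
  have hx : ∫⁻ ω, ∫⁻ z, ENNReal.ofReal (V z - 1) ∂(P (ω 0)) ∂(Pr x)
      = ∫⁻ z, ENNReal.ofReal (V z - 1) ∂(P x) := by
    rw [lintegral_congr_ae (ae_comp_eq_of_measure_eq_one (hstart x)
      (hW.lintegral_kernel.comp (measurable_pi_apply 0)))]
    simp
  rw [lintegral_tsum_indicator_returnTime hCm hf.ennreal_ofReal, ENNReal.ofReal_div_of_pos ha,
    ENNReal.le_div_iff_mul_le (Or.inl (by simpa using ha)) (Or.inl ENNReal.ofReal_ne_top),
    mul_comm, ← ENNReal.tsum_mul_left]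
  calc ∑' n, ENNReal.ofReal (1 - (γ + K / R))
        * ∫⁻ ω in avoidsUpTo {x | f x ≤ R} n, ENNReal.ofReal (f (ω (n + 1))) ∂(Pr x)
      ≤ ∫⁻ z, ENNReal.ofReal (V z - 1) ∂(P x) + ENNReal.ofReal K := by
        have hfX (n : ℕ) : Measurable fun ω : ℕ → 𝓧 => ENNReal.ofReal (f (ω (n + 1))) :=
          hf.ennreal_ofReal.comp (measurable_pi_apply _)
        simpa [lintegral_const_mul _ (hfX _), hx] using hsum
    _ ≤ ENNReal.ofReal (V x - 1 - (1 - γ) * f x + 2 * K) := by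
        rw [lintegral_ofReal_sub_one (hVint x) hV1,
          ← ENNReal.ofReal_add (by linarith [one_le_integral_of_one_le (hVint x) hV1]) hK.le]
        exact ENNReal.ofReal_le_ofReal (by linarith [hdrift x])

/-- Under the drift condition, for `x` in the sublevel set `C = {f ≤ R}`,
the expected sum of `f` along the chain up to the first return time to `C` is bounded:
`E[Σ_{k=1}^{τ_C} f(X_k) | X_0 = x] ≤ (V(x) - 1 - (1-γ) f(x) + 2K)/(1-γ_R)`. -/
theorem drift_return_time_sum_bound
    {𝓧 : Type*} [MeasurableSpace 𝓧]
    (P : Kernel 𝓧 𝓧) [IsMarkovKernel P]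
    (Pr : 𝓧 → Measure (ℕ → 𝓧)) (hprob : ∀ x, IsProbabilityMeasure (Pr x))
    (hstart : ∀ x, (Pr x) {ω | ω 0 = x} = 1)
    (hMarkov : ∀ (x : 𝓧) (n : ℕ) (g : 𝓧 → ENNReal), Measurable g →
      ∀ s : Set (ℕ → 𝓧),
        MeasurableSet[MeasurableSpace.comap (fun ω (i : Fin (n+1)) => ω i) inferInstance] s →
        ∫⁻ ω in s, g (ω (n+1)) ∂(Pr x) = ∫⁻ ω in s, (∫⁻ y, g y ∂(P (ω n))) ∂(Pr x))
    (V f : 𝓧 → ℝ) (hV : Measurable V) (hf : Measurable f)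
    (hV1 : ∀ x, 1 ≤ V x) (hf1 : ∀ x, 1 ≤ f x)
    (γ K R : ℝ) (hγ : γ ∈ Set.Ioo (0:ℝ) 1) (hK : 0 < K) (hR : K / (1 - γ) < R)
    (hVint : ∀ x, Integrable V (P x))
    (hdrift : ∀ x, (∫ y, V y ∂(P x)) - V x ≤ -(1 - γ) * f x + K)
    (C : Set 𝓧) (hC : C = {x | f x ≤ R})
    (x : 𝓧) (hx : x ∈ C) :
    ∫⁻ ω, (∑' k : ℕ,
        Set.indicator {ω' : ℕ → 𝓧 | 1 ≤ k ∧ ∀ j, 1 ≤ j → j < k → ω' j ∉ C}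
          (fun ω' => ENNReal.ofReal (f (ω' k))) ω) ∂(Pr x)
      ≤ ENNReal.ofReal ((V x - 1 - (1 - γ) * f x + 2 * K) / (1 - (γ + K / R))) :=
  drift_return_time_sum_bound_general P Pr hprob hstart hMarkov V f hV hf hV1 hf1 γ K R hγ hK hR
    hVint hdrift C hC x
end

section
/- Under the multiplicative drift condition log[(P exp(V))(x)] ≤ V(x) - (1-γ) f(x) + K, set C = {x : f(x) ≤ R} with R > K/(1-γ) and γ_R = γ + K/R. Then for every x ∈ C, E[exp((1-γ_R) Σ_{k=1}^{τ_C} f(X_k)) | X_0 = x] ≤ exp(V(x) - (1-γ) f(x) + 2K). -/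
/-!
Let `a = 1 - γ_R`. Outside `C` we have `f > R`, so `K ≤ (K/R) f` and the drift condition gives
`P e^V ≤ e^{V - a f}`; everywhere, `P e^V ≥ 1` (as `V ≥ 0`) gives `a f ≤ V + K`. Hence, writing
`S_n` for the sum of `f(X_k)` over `1 ≤ k ≤ min (n - 1, τ_C)`, the process `exp (a S_n + V(X_n))`
stopped at `τ_C` (with `V(X_n)` replaced by `-K` after `τ_C`) is a supermartingale from time `1`
on. It dominates `e^{-K} exp (a S_n)` and starts with mean `P e^V (x) ≤ e^{V x - (1-γ) f x + K}`;
monotone convergence in `n` concludes.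
-/

open MeasureTheory ProbabilityTheory ENNReal Finset

namespace MultiplicativeDrift

lemma apply_tsum_le_iSup_sum_range {φ : ℝ → ℝ≥0∞} (hφ : Continuous φ) (u : ℕ → ℝ) :
    φ (∑' k, u k) ≤ ⨆ n, φ (∑ k ∈ range n, u k) := by
  by_cases hu : Summable u
  · exact le_of_tendsto' ((hφ.tendsto _).comp hu.hasSum.tendsto_sum_nat) (le_iSup _)
  · simpa [tsum_eq_zero_of_not_summable hu] using le_iSup (fun n => φ (∑ k ∈ range n, u k)) 0

lemma lintegral_ofReal_exp_le_of_log_integral_le {α : Type*} [MeasurableSpace α]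
    {μ : Measure α} {u : α → ℝ} (hu : Integrable (fun y => Real.exp (u y)) μ) {c : ℝ}
    (h : Real.log (∫ y, Real.exp (u y) ∂μ) ≤ c) :
    ∫⁻ y, ENNReal.ofReal (Real.exp (u y)) ∂μ ≤ ENNReal.ofReal (Real.exp c) := by
  rw [← ofReal_integral_eq_lintegral_ofReal hu (ae_of_all _ fun y => (Real.exp_pos (u y)).le)]
  refine ENNReal.ofReal_le_ofReal ?_
  rcases (integral_nonneg fun y => (Real.exp_pos (u y)).le : 0 ≤ ∫ y, Real.exp (u y) ∂μ).eq_or_lt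
    with h0 | hpos
  · exact h0 ▸ (Real.exp_pos c).le
  · exact (Real.log_le_iff_le_exp hpos).mp h

variable {𝓧 : Type*} {C : Set 𝓧} {f V : 𝓧 → ℝ} {a K : ℝ} {n : ℕ} {ω : ℕ → 𝓧}

def noVisitBefore (C : Set 𝓧) (n : ℕ) : Set (ℕ → 𝓧) := {ω | ∀ j, 1 ≤ j → j < n → ω j ∉ C}

noncomputable def excursionTerm (C : Set 𝓧) (f : 𝓧 → ℝ) (k : ℕ) : (ℕ → 𝓧) → ℝ :=
  Set.indicator {ω | 1 ≤ k ∧ ∀ j, 1 ≤ j → j < k → ω j ∉ C} fun ω => f (ω k)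

/-- `∑ f (ω k)` over `1 ≤ k ≤ min (n - 1) τ_C`, where `τ_C` is the first return time to `C`. -/
noncomputable def excursionSum (C : Set 𝓧) (f : 𝓧 → ℝ) (n : ℕ) (ω : ℕ → 𝓧) : ℝ :=
  ∑ k ∈ range n, excursionTerm C f k ω

lemma mem_noVisitBefore_one : ω ∈ noVisitBefore C 1 := fun _ h₁ h₂ => absurd h₂ (by omega)

lemma mem_noVisitBefore_succ (hn : 1 ≤ n) :
    ω ∈ noVisitBefore C (n + 1) ↔ ω ∈ noVisitBefore C n ∧ ω n ∉ C := by
  refine ⟨fun h => ⟨fun j h₁ h₂ => h j h₁ (by omega), h n hn (by omega)⟩, ?_⟩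
  rintro ⟨h, hn⟩ j h₁ h₂
  rcases Nat.lt_succ_iff_lt_or_eq.mp h₂ with h₂ | rfl
  exacts [h j h₁ h₂, hn]

lemma excursionTerm_of_mem (hn : 1 ≤ n) (hω : ω ∈ noVisitBefore C n) :
    excursionTerm C f n ω = f (ω n) :=
  Set.indicator_of_mem (s := {ω | 1 ≤ n ∧ ω ∈ noVisitBefore C n}) ⟨hn, hω⟩ _

lemma excursionTerm_of_notMem (hω : ω ∉ noVisitBefore C n) : excursionTerm C f n ω = 0 :=
  Set.indicator_of_notMem (fun h => hω h.2) _

lemma excursionSum_one : excursionSum C f 1 ω = 0 := by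
  simp [excursionSum, excursionTerm]

lemma excursionSum_succ :
    excursionSum C f (n + 1) ω = excursionSum C f n ω + excursionTerm C f n ω :=
  sum_range_succ _ _

lemma excursionSum_mono (hf0 : ∀ z, 0 ≤ f z) (ω : ℕ → 𝓧) :
    Monotone fun n => excursionSum C f n ω :=
  monotone_nat_of_le_succ fun n => by
    rw [excursionSum_succ]
    exact le_add_of_nonneg_right (Set.indicator_nonneg (fun ω _ => hf0 (ω n)) ω)

/-- Replacing `V (ω n)` by `-K` once `C` has been visited absorbs the `+K` that the drift bound
loses at the visit, which makes this a supermartingale from `n = 1` on. -/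
noncomputable def lyapunov (C : Set 𝓧) (f V : 𝓧 → ℝ) (a K : ℝ) (n : ℕ) (ω : ℕ → 𝓧) : ℝ≥0∞ :=
  open Classical in
  ENNReal.ofReal (Real.exp (a * excursionSum C f n ω +
    if ω ∈ noVisitBefore C n then V (ω n) else -K))

lemma lyapunov_one : lyapunov C f V a K 1 ω = ENNReal.ofReal (Real.exp (V (ω 1))) := by
  simp [lyapunov, excursionSum_one, mem_noVisitBefore_one]

lemma ofReal_exp_excursionSum_le_lyapunov (hVK : ∀ z, -K ≤ V z) :
    ENNReal.ofReal (Real.exp (a * excursionSum C f n ω))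
      ≤ ENNReal.ofReal (Real.exp K) * lyapunov C f V a K n ω := by
  rw [lyapunov, ← ENNReal.ofReal_mul (Real.exp_nonneg _), ← Real.exp_add]
  refine ENNReal.ofReal_le_ofReal (Real.exp_le_exp.mpr ?_)
  split_ifs
  · linarith [hVK (ω n)]
  · linarith

lemma lyapunov_succ (ω : ℕ → 𝓧) :
    lyapunov C f V a K (n + 1) ω
      = (noVisitBefore C (n + 1))ᶜ.indicator
          (fun ω => ENNReal.ofReal (Real.exp (a * excursionSum C f (n + 1) ω - K))) ω
        + (noVisitBefore C (n + 1)).indicator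
          (fun ω => ENNReal.ofReal (Real.exp (a * excursionSum C f (n + 1) ω))) ω
          * ENNReal.ofReal (Real.exp (V (ω (n + 1)))) := by
  by_cases hω : ω ∈ noVisitBefore C (n + 1)
  · rw [Set.indicator_of_notMem (Set.notMem_compl_iff.mpr hω), Set.indicator_of_mem hω, zero_add,
      ← ENNReal.ofReal_mul (Real.exp_nonneg _), ← Real.exp_add, lyapunov, if_pos hω]
  · rw [Set.indicator_of_mem (Set.mem_compl hω), Set.indicator_of_notMem hω, zero_mul, add_zero,
      lyapunov, if_neg hω, sub_eq_add_neg]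

lemma indicator_add_indicator_mul_le_lyapunov (hn : 1 ≤ n) (hin : ∀ z ∈ C, a * f z ≤ V z + K)
    {Q : 𝓧 → ℝ≥0∞} (hout : ∀ z ∉ C, Q z ≤ ENNReal.ofReal (Real.exp (V z - a * f z)))
    (ω : ℕ → 𝓧) :
    (noVisitBefore C (n + 1))ᶜ.indicator
        (fun ω => ENNReal.ofReal (Real.exp (a * excursionSum C f (n + 1) ω - K))) ω
      + (noVisitBefore C (n + 1)).indicator
        (fun ω => ENNReal.ofReal (Real.exp (a * excursionSum C f (n + 1) ω))) ω * Q (ω n)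
      ≤ lyapunov C f V a K n ω := by
  by_cases hprev : ω ∈ noVisitBefore C n
  · have hsum : excursionSum C f (n + 1) ω = excursionSum C f n ω + f (ω n) := by
      rw [excursionSum_succ, excursionTerm_of_mem hn hprev]
    rw [lyapunov, if_pos hprev]
    by_cases hvisit : ω n ∈ C
    · have hω : ω ∉ noVisitBefore C (n + 1) := fun h => ((mem_noVisitBefore_succ hn).mp h).2 hvisit
      rw [Set.indicator_of_mem (Set.mem_compl hω), Set.indicator_of_notMem hω, zero_mul, add_zero,
        hsum]
      refine ENNReal.ofReal_le_ofReal (Real.exp_le_exp.mpr ?_)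
      linarith [hin _ hvisit]
    · have hω : ω ∈ noVisitBefore C (n + 1) := (mem_noVisitBefore_succ hn).mpr ⟨hprev, hvisit⟩
      rw [Set.indicator_of_notMem (Set.notMem_compl_iff.mpr hω), Set.indicator_of_mem hω, zero_add,
        hsum]
      calc ENNReal.ofReal (Real.exp (a * (excursionSum C f n ω + f (ω n)))) * Q (ω n)
          ≤ ENNReal.ofReal (Real.exp (a * (excursionSum C f n ω + f (ω n))))
            * ENNReal.ofReal (Real.exp (V (ω n) - a * f (ω n))) := by gcongr; exact hout _ hvisit
        _ = ENNReal.ofReal (Real.exp (a * excursionSum C f n ω + V (ω n))) := by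
          rw [← ENNReal.ofReal_mul (Real.exp_nonneg _), ← Real.exp_add]
          ring_nf
  · have hω : ω ∉ noVisitBefore C (n + 1) := fun h => hprev ((mem_noVisitBefore_succ hn).mp h).1
    rw [Set.indicator_of_mem (Set.mem_compl hω), Set.indicator_of_notMem hω, zero_mul, add_zero,
      lyapunov, if_neg hprev, excursionSum_succ, excursionTerm_of_notMem hprev, add_zero,
      sub_eq_add_neg]

variable [MeasurableSpace 𝓧]

abbrev pastSigma (n : ℕ) : MeasurableSpace (ℕ → 𝓧) :=
  MeasurableSpace.comap (fun ω (i : Fin (n + 1)) => ω i) inferInstance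

lemma pastSigma_le (n : ℕ) : pastSigma (𝓧 := 𝓧) n ≤ MeasurableSpace.pi :=
  measurable_iff_comap_le.mp (measurable_pi_lambda _ fun _ => measurable_pi_apply _)

lemma measurable_pastSigma_apply {n i : ℕ} (hi : i ≤ n) :
    Measurable[pastSigma n] fun ω : ℕ → 𝓧 => ω i :=
  (measurable_pi_apply (⟨i, Nat.lt_succ_of_le hi⟩ : Fin (n + 1))).comp
    (comap_measurable fun (ω : ℕ → 𝓧) (j : Fin (n + 1)) => ω j)

def HasMarkovProperty (P : Kernel 𝓧 𝓧) (μ : Measure (ℕ → 𝓧)) : Prop :=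
  ∀ (n : ℕ) (g : 𝓧 → ℝ≥0∞), Measurable g → ∀ s : Set (ℕ → 𝓧), MeasurableSet[pastSigma n] s →
    ∫⁻ ω in s, g (ω (n + 1)) ∂μ = ∫⁻ ω in s, ∫⁻ y, g y ∂(P (ω n)) ∂μ

/-- The densities `g (ω (n+1))` and `P g (ω n)` define the same measure on `pastSigma n`. -/
lemma HasMarkovProperty.lintegral_mul_comp_succ {P : Kernel 𝓧 𝓧} {μ : Measure (ℕ → 𝓧)}
    (hμ : HasMarkovProperty P μ) {n : ℕ} {g : 𝓧 → ℝ≥0∞} (hg : Measurable g)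
    {H : (ℕ → 𝓧) → ℝ≥0∞} (hH : Measurable[pastSigma n] H) :
    ∫⁻ ω, H ω * g (ω (n + 1)) ∂μ = ∫⁻ ω, H ω * ∫⁻ y, g y ∂(P (ω n)) ∂μ := by
  have hnext : Measurable fun ω : ℕ → 𝓧 => g (ω (n + 1)) := hg.comp (measurable_pi_apply _)
  have hstep : Measurable fun ω : ℕ → 𝓧 => ∫⁻ y, g y ∂(P (ω n)) :=
    hg.lintegral_kernel.comp (measurable_pi_apply _)
  have htrim : (μ.withDensity fun ω => g (ω (n + 1))).trim (pastSigma_le n)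
      = (μ.withDensity fun ω => ∫⁻ y, g y ∂(P (ω n))).trim (pastSigma_le n) := by
    refine @Measure.ext _ (pastSigma n) _ _ fun s hs => ?_
    rw [trim_measurableSet_eq (pastSigma_le n) hs, trim_measurableSet_eq (pastSigma_le n) hs,
      withDensity_apply _ (pastSigma_le n s hs), withDensity_apply _ (pastSigma_le n s hs),
      hμ n g hg s hs]
  have hH' : Measurable H := hH.mono (pastSigma_le n) le_rfl
  simp_rw [mul_comm (H _)]
  calc ∫⁻ ω, g (ω (n + 1)) * H ω ∂μ
      = ∫⁻ ω, H ω ∂(μ.withDensity fun ω => g (ω (n + 1))).trim (pastSigma_le n) := by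
        rw [lintegral_trim _ hH, lintegral_withDensity_eq_lintegral_mul μ hnext hH']; rfl
    _ = ∫⁻ ω, (∫⁻ y, g y ∂(P (ω n))) * H ω ∂μ := by
        rw [htrim, lintegral_trim _ hH, lintegral_withDensity_eq_lintegral_mul μ hstep hH']; rfl

lemma lintegral_comp_eval_zero {μ : Measure (ℕ → 𝓧)} [IsProbabilityMeasure μ] {x : 𝓧}
    (hstart : μ {ω | ω 0 = x} = 1) {φ : 𝓧 → ℝ≥0∞} (hφ : Measurable φ) :
    ∫⁻ ω, φ (ω 0) ∂μ = φ x := by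
  have hmeas : MeasurableSet {ω : ℕ → 𝓧 | φ (ω 0) = φ x} :=
    (hφ.comp (measurable_pi_apply 0)) (measurableSet_singleton _)
  have hae : ∀ᵐ ω ∂μ, φ (ω 0) = φ x := by
    refine (prob_compl_eq_zero_iff hmeas).mpr (le_antisymm prob_le_one ?_)
    exact hstart ▸ measure_mono fun ω (hω : ω 0 = x) => by simp [hω]
  rw [lintegral_congr_ae hae, lintegral_const, measure_univ, mul_one]

lemma measurableSet_noVisitBefore (hC : MeasurableSet C) {m : ℕ} (hm : m ≤ n + 1) :
    MeasurableSet[pastSigma n] (noVisitBefore C m) := by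
  simp only [noVisitBefore, Set.ofPred_forall]
  exact .iInter fun j => .iInter fun _ => .iInter fun hj =>
    measurable_pastSigma_apply (by omega) hC.compl

lemma measurable_excursionSum (hC : MeasurableSet C) (hf : Measurable f) {m : ℕ}
    (hm : m ≤ n + 1) : Measurable[pastSigma n] (excursionSum C f m) :=
  Finset.measurable_sum _ fun k hk => by
    have hk : k ≤ n := by have := mem_range.mp hk; omega
    exact (hf.comp (measurable_pastSigma_apply hk)).indicator
      ((MeasurableSet.const _).inter (measurableSet_noVisitBefore hC (by omega)))

lemma measurable_lyapunov (hC : MeasurableSet C) (hf : Measurable f) (hV : Measurable V) :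
    Measurable[pastSigma n] (lyapunov C f V a K n) := by
  classical
  refine ENNReal.measurable_ofReal.comp (Real.measurable_exp.comp
    (((measurable_excursionSum hC hf n.le_succ).const_mul a).add ?_))
  exact Measurable.ite (measurableSet_noVisitBefore hC n.le_succ)
    (hV.comp (measurable_pastSigma_apply le_rfl)) measurable_const

section Supermartingale

variable {P : Kernel 𝓧 𝓧} {μ : Measure (ℕ → 𝓧)}

lemma lintegral_lyapunov_succ_le (hμ : HasMarkovProperty P μ) (hC : MeasurableSet C)
    (hf : Measurable f) (hV : Measurable V) (hn : 1 ≤ n) (hin : ∀ z ∈ C, a * f z ≤ V z + K)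
    (hout : ∀ z ∉ C, ∫⁻ y, ENNReal.ofReal (Real.exp (V y)) ∂(P z)
      ≤ ENNReal.ofReal (Real.exp (V z - a * f z))) :
    ∫⁻ ω, lyapunov C f V a K (n + 1) ω ∂μ ≤ ∫⁻ ω, lyapunov C f V a K n ω ∂μ := by
  have hA := measurableSet_noVisitBefore hC (n := n) le_rfl
  have hS := (measurable_excursionSum hC hf (n := n) le_rfl).const_mul a
  have hG : Measurable[pastSigma n] fun ω => (noVisitBefore C (n + 1))ᶜ.indicator
      (fun ω => ENNReal.ofReal (Real.exp (a * excursionSum C f (n + 1) ω - K))) ω :=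
    (ENNReal.measurable_ofReal.comp (Real.measurable_exp.comp (hS.sub_const K))).indicator hA.compl
  have hH : Measurable[pastSigma n] fun ω => (noVisitBefore C (n + 1)).indicator
      (fun ω => ENNReal.ofReal (Real.exp (a * excursionSum C f (n + 1) ω))) ω :=
    (ENNReal.measurable_ofReal.comp (Real.measurable_exp.comp hS)).indicator hA
  have hg : Measurable fun y => ENNReal.ofReal (Real.exp (V y)) :=
    ENNReal.measurable_ofReal.comp (Real.measurable_exp.comp hV)
  simp_rw [lyapunov_succ]
  rw [lintegral_add_left (hG.mono (pastSigma_le n) le_rfl), hμ.lintegral_mul_comp_succ hg hH,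
    ← lintegral_add_left (hG.mono (pastSigma_le n) le_rfl)]
  exact lintegral_mono (indicator_add_indicator_mul_le_lyapunov hn hin hout)

lemma lintegral_lyapunov_le_lintegral_one (hμ : HasMarkovProperty P μ) (hC : MeasurableSet C)
    (hf : Measurable f) (hV : Measurable V) (hin : ∀ z ∈ C, a * f z ≤ V z + K)
    (hout : ∀ z ∉ C, ∫⁻ y, ENNReal.ofReal (Real.exp (V y)) ∂(P z)
      ≤ ENNReal.ofReal (Real.exp (V z - a * f z))) (n : ℕ) :
    ∫⁻ ω, lyapunov C f V a K (n + 1) ω ∂μ ≤ ∫⁻ ω, lyapunov C f V a K 1 ω ∂μ := by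
  induction n with
  | zero => rfl
  | succ n ih => exact (lintegral_lyapunov_succ_le hμ hC hf hV (by omega) hin hout).trans ih

lemma lintegral_lyapunov_one [IsProbabilityMeasure μ] (hμ : HasMarkovProperty P μ) {x : 𝓧}
    (hstart : μ {ω | ω 0 = x} = 1) (hV : Measurable V) :
    ∫⁻ ω, lyapunov C f V a K 1 ω ∂μ = ∫⁻ y, ENNReal.ofReal (Real.exp (V y)) ∂(P x) := by
  have hg : Measurable fun y => ENNReal.ofReal (Real.exp (V y)) :=
    ENNReal.measurable_ofReal.comp (Real.measurable_exp.comp hV)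
  calc ∫⁻ ω, lyapunov C f V a K 1 ω ∂μ = ∫⁻ ω, ENNReal.ofReal (Real.exp (V (ω (0 + 1)))) ∂μ :=
        lintegral_congr fun _ => lyapunov_one
    _ = ∫⁻ ω, ∫⁻ y, ENNReal.ofReal (Real.exp (V y)) ∂(P (ω 0)) ∂μ := by
        simpa using hμ 0 _ hg Set.univ MeasurableSet.univ
    _ = _ := lintegral_comp_eval_zero hstart hg.lintegral_kernel

theorem lintegral_exp_mul_tsum_excursionTerm_le [IsProbabilityMeasure μ]
    (hμ : HasMarkovProperty P μ) {x : 𝓧} (hstart : μ {ω | ω 0 = x} = 1) (hC : MeasurableSet C)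
    (hf : Measurable f) (hV : Measurable V) (hf0 : ∀ z, 0 ≤ f z) (ha : 0 ≤ a)
    (hVK : ∀ z, -K ≤ V z) (hin : ∀ z ∈ C, a * f z ≤ V z + K)
    (hout : ∀ z ∉ C, ∫⁻ y, ENNReal.ofReal (Real.exp (V y)) ∂(P z)
      ≤ ENNReal.ofReal (Real.exp (V z - a * f z))) :
    ∫⁻ ω, ENNReal.ofReal (Real.exp (a * ∑' k, excursionTerm C f k ω)) ∂μ
      ≤ ENNReal.ofReal (Real.exp K) * ∫⁻ y, ENNReal.ofReal (Real.exp (V y)) ∂(P x) := by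
  let F : ℕ → (ℕ → 𝓧) → ℝ≥0∞ := fun n ω => ENNReal.ofReal (Real.exp (a * excursionSum C f n ω))
  have hFmono : Monotone F := fun m n hmn ω =>
    ENNReal.ofReal_le_ofReal (Real.exp_le_exp.mpr
      (mul_le_mul_of_nonneg_left (excursionSum_mono hf0 ω hmn) ha))
  have hFmeas (n : ℕ) : Measurable (F n) :=
    (ENNReal.measurable_ofReal.comp (Real.measurable_exp.comp
      ((measurable_excursionSum hC hf (n := n) n.le_succ).const_mul a))).mono
        (pastSigma_le n) le_rfl
  have hFbound (n : ℕ) : ∫⁻ ω, F n ω ∂μ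
      ≤ ENNReal.ofReal (Real.exp K) * ∫⁻ y, ENNReal.ofReal (Real.exp (V y)) ∂(P x) :=
    calc ∫⁻ ω, F n ω ∂μ
        ≤ ∫⁻ ω, ENNReal.ofReal (Real.exp K) * lyapunov C f V a K (n + 1) ω ∂μ :=
          lintegral_mono fun ω => (hFmono n.le_succ ω).trans
            (ofReal_exp_excursionSum_le_lyapunov hVK)
      _ = ENNReal.ofReal (Real.exp K) * ∫⁻ ω, lyapunov C f V a K (n + 1) ω ∂μ :=
          lintegral_const_mul _ ((measurable_lyapunov hC hf hV).mono (pastSigma_le _) le_rfl)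
      _ ≤ ENNReal.ofReal (Real.exp K) * ∫⁻ ω, lyapunov C f V a K 1 ω ∂μ := by
          gcongr _ * ?_; exact lintegral_lyapunov_le_lintegral_one hμ hC hf hV hin hout n
      _ = _ := by rw [lintegral_lyapunov_one hμ hstart hV]
  calc ∫⁻ ω, ENNReal.ofReal (Real.exp (a * ∑' k, excursionTerm C f k ω)) ∂μ
      ≤ ∫⁻ ω, ⨆ n, F n ω ∂μ := lintegral_mono fun ω =>
        apply_tsum_le_iSup_sum_range (φ := fun t => ENNReal.ofReal (Real.exp (a * t)))
          (ENNReal.continuous_ofReal.comp (by fun_prop)) fun k => excursionTerm C f k ω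
    _ = ⨆ n, ∫⁻ ω, F n ω ∂μ := lintegral_iSup hFmeas hFmono
    _ ≤ _ := iSup_le hFbound

end Supermartingale

end MultiplicativeDrift

open MultiplicativeDrift

theorem multiplicative_drift_exponential_moment_bound_general
    {𝓧 : Type*} [MeasurableSpace 𝓧]
    (P : Kernel 𝓧 𝓧) [IsMarkovKernel P]
    (Pr : 𝓧 → Measure (ℕ → 𝓧)) (hprob : ∀ x, IsProbabilityMeasure (Pr x))
    (hstart : ∀ x, (Pr x) {ω | ω 0 = x} = 1)
    (hMarkov : ∀ (x : 𝓧) (n : ℕ) (g : 𝓧 → ENNReal), Measurable g →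
      ∀ s : Set (ℕ → 𝓧),
        MeasurableSet[MeasurableSpace.comap (fun ω (i : Fin (n+1)) => ω i) inferInstance] s →
        ∫⁻ ω in s, g (ω (n+1)) ∂(Pr x) = ∫⁻ ω in s, (∫⁻ y, g y ∂(P (ω n))) ∂(Pr x))
    (V f : 𝓧 → ℝ) (hV : Measurable V) (hf : Measurable f)
    (hV0 : ∀ x, 0 ≤ V x) (hf0 : ∀ x, 0 ≤ f x)
    (γ K R : ℝ) (hγ : γ ∈ Set.Ioo (0:ℝ) 1) (hK : 0 ≤ K) (hR : K / (1 - γ) < R)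
    (hexpint : ∀ x, Integrable (fun y => Real.exp (V y)) (P x))
    (hdrift : ∀ x, Real.log (∫ y, Real.exp (V y) ∂(P x)) ≤ V x - (1 - γ) * f x + K)
    (C : Set 𝓧) (hC : C = {x | f x ≤ R})
    (x : 𝓧) :
    ∫⁻ ω, ENNReal.ofReal (Real.exp ((1 - (γ + K / R)) * ∑' k : ℕ,
        Set.indicator {ω' : ℕ → 𝓧 | 1 ≤ k ∧ ∀ j, 1 ≤ j → j < k → ω' j ∉ C}
          (fun ω' => f (ω' k)) ω)) ∂(Pr x)
      ≤ ENNReal.ofReal (Real.exp (V x - (1 - γ) * f x + 2 * K)) := by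
  obtain ⟨-, hγ1⟩ := hγ
  have hR0 : 0 < R := (div_nonneg hK (by linarith)).trans_lt hR
  have hKR_nonneg : 0 ≤ K / R := div_nonneg hK hR0.le
  have hKR_lt : K / R < 1 - γ := by
    rw [div_lt_iff₀ hR0]; rw [div_lt_iff₀ (by linarith)] at hR; linarith
  have hPV (z : 𝓧) := lintegral_ofReal_exp_le_of_log_integral_le (hexpint z) (hdrift z)
  have hlog (z : 𝓧) : 0 ≤ V z - (1 - γ) * f z + K := by
    refine (Real.log_nonneg ?_).trans (hdrift z)
    simpa using integral_mono (integrable_const 1) (hexpint z) fun y => Real.one_le_exp (hV0 y)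
  have hout (z : 𝓧) (hz : z ∉ C) : ∫⁻ y, ENNReal.ofReal (Real.exp (V y)) ∂(P z)
      ≤ ENNReal.ofReal (Real.exp (V z - (1 - (γ + K / R)) * f z)) := by
    have hfz : R < f z := by rw [hC] at hz; exact lt_of_not_ge hz
    have hKf : K ≤ K / R * f z := by
      rw [div_mul_eq_mul_div, le_div_iff₀ hR0]; exact mul_le_mul_of_nonneg_left hfz.le hK
    exact (hPV z).trans (ENNReal.ofReal_le_ofReal (Real.exp_le_exp.mpr (by linarith)))
  have := hprob x
  calc _ ≤ ENNReal.ofReal (Real.exp K) * ∫⁻ y, ENNReal.ofReal (Real.exp (V y)) ∂(P x) :=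
        lintegral_exp_mul_tsum_excursionTerm_le (hMarkov x) (hstart x)
          (hC ▸ measurableSet_le hf measurable_const) hf hV hf0 (by linarith)
          (fun z => by linarith [hV0 z])
          (fun z _ => by nlinarith [hlog z, mul_nonneg hKR_nonneg (hf0 z)])
          hout
    _ ≤ ENNReal.ofReal (Real.exp K) * ENNReal.ofReal (Real.exp (V x - (1 - γ) * f x + K)) := by
        gcongr; exact hPV x
    _ = ENNReal.ofReal (Real.exp (V x - (1 - γ) * f x + 2 * K)) := by
        rw [← ENNReal.ofReal_mul (Real.exp_nonneg _), ← Real.exp_add]; ring_nf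

/-- Under the multiplicative drift condition `log[(P exp V)(x)] ≤ V(x) - (1-γ) f(x) + K`,
with `C = {f ≤ R}`, `R > K/(1-γ)`, `γ_R = γ + K/R`: for every `x ∈ C`,
`E[exp((1-γ_R) Σ_{k=1}^{τ_C} f(X_k)) | X_0 = x] ≤ exp(V(x) - (1-γ) f(x) + 2K)`. -/
theorem multiplicative_drift_exponential_moment_bound
    {𝓧 : Type*} [MeasurableSpace 𝓧]
    (P : Kernel 𝓧 𝓧) [IsMarkovKernel P]
    (Pr : 𝓧 → Measure (ℕ → 𝓧)) (hprob : ∀ x, IsProbabilityMeasure (Pr x))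
    (hstart : ∀ x, (Pr x) {ω | ω 0 = x} = 1)
    (hMarkov : ∀ (x : 𝓧) (n : ℕ) (g : 𝓧 → ENNReal), Measurable g →
      ∀ s : Set (ℕ → 𝓧),
        MeasurableSet[MeasurableSpace.comap (fun ω (i : Fin (n+1)) => ω i) inferInstance] s →
        ∫⁻ ω in s, g (ω (n+1)) ∂(Pr x) = ∫⁻ ω in s, (∫⁻ y, g y ∂(P (ω n))) ∂(Pr x))
    (V f : 𝓧 → ℝ) (hV : Measurable V) (hf : Measurable f)
    (hV0 : ∀ x, 0 ≤ V x) (hf0 : ∀ x, 0 ≤ f x)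
    (γ K R : ℝ) (hγ : γ ∈ Set.Ioo (0:ℝ) 1) (hK : 0 ≤ K) (hR : K / (1 - γ) < R)
    (hexpint : ∀ x, Integrable (fun y => Real.exp (V y)) (P x))
    (hdrift : ∀ x, Real.log (∫ y, Real.exp (V y) ∂(P x)) ≤ V x - (1 - γ) * f x + K)
    (C : Set 𝓧) (hC : C = {x | f x ≤ R})
    (x : 𝓧) (hx : x ∈ C) :
    ∫⁻ ω, ENNReal.ofReal (Real.exp ((1 - (γ + K / R)) * ∑' k : ℕ,
        Set.indicator {ω' : ℕ → 𝓧 | 1 ≤ k ∧ ∀ j, 1 ≤ j → j < k → ω' j ∉ C}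
          (fun ω' => f (ω' k)) ω)) ∂(Pr x)
      ≤ ENNReal.ofReal (Real.exp (V x - (1 - γ) * f x + 2 * K)) :=
  multiplicative_drift_exponential_moment_bound_general P Pr hprob hstart hMarkov V f hV hf hV0 hf0
    γ K R hγ hK hR hexpint hdrift C hC x
end

section
/- Let Y_1,...,Y_N be i.i.d. from Q, w : X → [0,∞) with ∫ w dQ = 1 and ∫ w² dQ < ∞, and g : X → ℝ bounded with sup|g| ≤ G. Then the mean squared error of the self-normalized importance sampling estimate satisfies E|Σ_i (w(Y_i)/Σ_j w(Y_j)) g(Y_i) - ∫ g w dQ|² ≤ (4G²/N) ∫ w² dQ - 2G²/N. -/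
open MeasureTheory ProbabilityTheory

/-!
Write the estimate as `T = P / S` with `P = ∑ g(Yᵢ) w(Yᵢ)` and `S = ∑ w(Yᵢ)`. It is a weighted
mean of the `g(Yᵢ)`, so `|T| ≤ G`, and `T - I = (P/N - I) + T (1 - S/N)` gives
`(T - I)² ≤ 2 (P/N - I)² + 2 G² (S/N - 1)²`. Both terms on the right are squared errors of plain
Monte Carlo means, with expectations `Var_Q(g w) / N ≤ G² ∫ w² dQ / N` and
`Var_Q(w) / N = (∫ w² dQ - 1) / N`.
-/

section WeightedMean

variable {ι : Type*} (s : Finset ι) {a b : ι → ℝ} {G : ℝ}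

lemma abs_sum_div_sum_mul_le (ha : ∀ i ∈ s, 0 ≤ a i) (hb : ∀ i ∈ s, |b i| ≤ G) (hG : 0 ≤ G) :
    |∑ i ∈ s, a i / (∑ j ∈ s, a j) * b i| ≤ G := by
  have hS : 0 ≤ ∑ j ∈ s, a j := Finset.sum_nonneg ha
  calc |∑ i ∈ s, a i / (∑ j ∈ s, a j) * b i|
      ≤ ∑ i ∈ s, a i / (∑ j ∈ s, a j) * G := by
        refine (Finset.abs_sum_le_sum_abs _ _).trans (Finset.sum_le_sum fun i hi => ?_)
        rw [abs_mul, abs_of_nonneg (div_nonneg (ha i hi) hS)]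
        exact mul_le_mul_of_nonneg_left (hb i hi) (div_nonneg (ha i hi) hS)
    _ = (∑ j ∈ s, a j) / (∑ j ∈ s, a j) * G := by rw [← Finset.sum_mul, ← Finset.sum_div]
    _ ≤ G := mul_le_of_le_one_left hG (div_self_le_one _)

lemma sq_sum_div_sum_mul_sub_le (ha : ∀ i ∈ s, 0 ≤ a i) (hb : ∀ i ∈ s, |b i| ≤ G) (hG : 0 ≤ G)
    {n : ℝ} (hn : n ≠ 0) (I : ℝ) :
    (∑ i ∈ s, a i / (∑ j ∈ s, a j) * b i - I) ^ 2
      ≤ 2 * ((∑ i ∈ s, b i * a i) / n - I) ^ 2 + 2 * G ^ 2 * ((∑ i ∈ s, a i) / n - 1) ^ 2 := by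
  set S := ∑ j ∈ s, a j
  set P := ∑ i ∈ s, b i * a i
  set T := ∑ i ∈ s, a i / S * b i
  have hT : T = P / S := by
    simp only [T, P, Finset.sum_div]
    exact Finset.sum_congr rfl fun i _ => by ring
  have hdecomp : T - I = (P / n - I) + T * (1 - S / n) := by
    by_cases hS : S = 0
    -- all weights vanish, so `T = P / 0 = 0` and `P = 0`
    · have hP : P = 0 := Finset.sum_eq_zero fun i hi => by
        rw [(Finset.sum_eq_zero_iff_of_nonneg ha).mp hS i hi, mul_zero]
      simp [hT, hP, hS]
    · rw [hT]; field_simp; ring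
  have hT2 : T ^ 2 ≤ G ^ 2 :=
    sq_le_sq.mpr ((abs_sum_div_sum_mul_le s ha hb hG).trans (le_abs_self G))
  calc (T - I) ^ 2 ≤ 2 * ((P / n - I) ^ 2 + (T * (1 - S / n)) ^ 2) := hdecomp ▸ add_sq_le
    _ ≤ 2 * (P / n - I) ^ 2 + 2 * G ^ 2 * (S / n - 1) ^ 2 := by
        rw [mul_pow, ← neg_sub, neg_sq]
        nlinarith [mul_le_mul_of_nonneg_right hT2 (sq_nonneg (S / n - 1))]

end WeightedMean

section SampleMean

variable {Ω 𝓧 ι : Type*} [MeasurableSpace Ω] [MeasurableSpace 𝓧] [Fintype ι]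
  {μ : Measure Ω} {Q : Measure 𝓧} {Y : ι → Ω → 𝓧} {φ : 𝓧 → ℝ}

lemma memLp_sum_comp {p : ENNReal} (hY : ∀ i, MeasurePreserving (Y i) μ Q) (hφ : MemLp φ p Q) :
    MemLp (fun ω => ∑ i, φ (Y i ω)) p μ := by
  simpa only [Finset.sum_fn] using memLp_finsetSum' Finset.univ (f := fun i ω => φ (Y i ω))
    fun i _ => hφ.comp_measurePreserving (hY i)

lemma integrable_sq_sum_div_sub [IsFiniteMeasure μ] (hY : ∀ i, MeasurePreserving (Y i) μ Q)
    (hφ : MemLp φ 2 Q) (n c : ℝ) : Integrable (fun ω => ((∑ i, φ (Y i ω)) / n - c) ^ 2) μ := by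
  simp_rw [div_eq_mul_inv]
  exact (((memLp_sum_comp hY hφ).mul_const n⁻¹).sub (memLp_const c)).integrable_sq

lemma integral_sum_comp (hY : ∀ i, MeasurePreserving (Y i) μ Q) (hφ : Integrable φ Q) :
    ∫ ω, ∑ i, φ (Y i ω) ∂μ = Fintype.card ι * ∫ z, φ z ∂Q := by
  have hcomp (i : ι) : ∫ ω, φ (Y i ω) ∂μ = ∫ z, φ z ∂Q := by
    rw [← (hY i).map_eq, integral_map (hY i).aemeasurable]
    exact (hY i).map_eq ▸ hφ.aestronglyMeasurable
  rw [integral_finsetSum (f := fun i ω => φ (Y i ω)) _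
    fun i _ => (hY i).integrable_comp_of_integrable hφ]
  simp [hcomp]

lemma variance_sum_comp [IsProbabilityMeasure μ] (hY : ∀ i, MeasurePreserving (Y i) μ Q)
    (hind : iIndepFun Y μ) (hφ : Measurable φ) (hφ2 : MemLp φ 2 Q) :
    Var[fun ω => ∑ i, φ (Y i ω); μ] = Fintype.card ι * Var[φ; Q] := by
  rw [← Finset.sum_fn (g := fun i ω => φ (Y i ω)),
    IndepFun.variance_sum (X := fun i ω => φ (Y i ω))
      (fun i _ => hφ2.comp_measurePreserving (hY i))
      fun i _ j _ hij => (hind.indepFun hij).comp hφ hφ]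
  simp [(hY _).variance_fun_comp hφ.aemeasurable]

lemma integral_sq_sum_div_card_sub_integral [IsProbabilityMeasure μ] [IsFiniteMeasure Q]
    [Nonempty ι] (hY : ∀ i, MeasurePreserving (Y i) μ Q) (hind : iIndepFun Y μ) (hφ : Measurable φ)
    (hφ2 : MemLp φ 2 Q) :
    ∫ ω, ((∑ i, φ (Y i ω)) / Fintype.card ι - ∫ z, φ z ∂Q) ^ 2 ∂μ
      = Var[φ; Q] / Fintype.card ι := by
  have hn : (Fintype.card ι : ℝ) ≠ 0 := Nat.cast_ne_zero.mpr Fintype.card_ne_zero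
  have hsum := memLp_sum_comp hY hφ2
  have hmean : ∫ ω, (∑ i, φ (Y i ω)) / Fintype.card ι ∂μ = ∫ z, φ z ∂Q := by
    rw [integral_div, integral_sum_comp hY (hφ2.integrable one_le_two), mul_div_cancel_left₀ _ hn]
  calc ∫ ω, ((∑ i, φ (Y i ω)) / Fintype.card ι - ∫ z, φ z ∂Q) ^ 2 ∂μ
      = Var[fun ω => (∑ i, φ (Y i ω)) / Fintype.card ι; μ] := by
        rw [variance_eq_integral (hsum.aemeasurable.div_const _), hmean]
    _ = Var[fun ω => ∑ i, φ (Y i ω); μ] * ((Fintype.card ι : ℝ)⁻¹) ^ 2 := by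
        simp_rw [div_eq_mul_inv]; exact variance_mul_const _ _ _
    _ = Var[φ; Q] / Fintype.card ι := by
        rw [variance_sum_comp hY hind hφ hφ2]; field_simp

end SampleMean

lemma variance_mul_le_of_abs_le {𝓧 : Type*} [MeasurableSpace 𝓧] {Q : Measure 𝓧}
    [IsProbabilityMeasure Q] {g w : 𝓧 → ℝ} {G : ℝ} (hg : Measurable g) (hG : ∀ z, |g z| ≤ G)
    (hw : MemLp w 2 Q) :
    Var[fun z => g z * w z; Q] ≤ G ^ 2 * ∫ z, w z ^ 2 ∂Q := by
  have hsq (z : 𝓧) : (g z * w z) ^ 2 ≤ G ^ 2 * w z ^ 2 := by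
    rw [mul_pow]
    exact mul_le_mul_of_nonneg_right (sq_le_sq.mpr ((hG z).trans (le_abs_self G))) (sq_nonneg _)
  have hgw : AEStronglyMeasurable (fun z => g z * w z) Q :=
    hg.aestronglyMeasurable.mul hw.aestronglyMeasurable
  calc Var[fun z => g z * w z; Q] ≤ ∫ z, (g z * w z) ^ 2 ∂Q := variance_le_expectation_sq hgw
    _ ≤ ∫ z, G ^ 2 * w z ^ 2 ∂Q := by
        refine integral_mono_of_nonneg (.of_forall fun z => sq_nonneg _)
          (hw.integrable_sq.const_mul _) (.of_forall hsq)
    _ = G ^ 2 * ∫ z, w z ^ 2 ∂Q := integral_const_mul _ _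

/-- Mean squared error bound for self-normalized importance sampling with bounded
integrand: `E|Σ_i (w(Y_i)/Σ_j w(Y_j)) g(Y_i) - ∫ g w dQ|² ≤ (4G²/N)∫ w² dQ - 2G²/N`. -/
theorem self_normalized_is_mse_bound
    {Ω 𝓧 : Type*} [MeasurableSpace Ω] [MeasurableSpace 𝓧]
    (μ : Measure Ω) [IsProbabilityMeasure μ]
    (Q : Measure 𝓧) [IsProbabilityMeasure Q]
    (N : ℕ) (hN : 0 < N)
    (Y : Fin N → Ω → 𝓧) (hY : ∀ i, Measurable (Y i))
    (hiid : iIndepFun Y μ)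
    (hdist : ∀ i, μ.map (Y i) = Q)
    (w : 𝓧 → ℝ) (hw : Measurable w) (hw0 : ∀ z, 0 ≤ w z)
    (hwmean : ∫ z, w z ∂Q = 1)
    (hw2 : Integrable (fun z => (w z) ^ 2) Q)
    (g : 𝓧 → ℝ) (hg : Measurable g) (G : ℝ) (hG : ∀ z, |g z| ≤ G) :
    ∫ ω, ((∑ i, (w (Y i ω) / ∑ j, w (Y j ω)) * g (Y i ω)) - ∫ z, g z * w z ∂Q) ^ 2 ∂μ
      ≤ (4 * G ^ 2 / N) * (∫ z, (w z) ^ 2 ∂Q) - 2 * G ^ 2 / N := by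
  have : Nonempty (Fin N) := ⟨⟨0, hN⟩⟩
  have hG0 : 0 ≤ G := (abs_nonneg _).trans (hG (nonempty_of_isProbabilityMeasure Q).some)
  have hYQ (i : Fin N) : MeasurePreserving (Y i) μ Q := ⟨hY i, hdist i⟩
  have hwL2 : MemLp w 2 Q := (memLp_two_iff_integrable_sq hw.aestronglyMeasurable).mpr hw2
  have hgwL2 : MemLp (fun z => g z * w z) 2 Q :=
    hwL2.mul' (memLp_top_of_bound hg.aestronglyMeasurable G (.of_forall hG))
  have hvar_w : Var[w; Q] = ∫ z, w z ^ 2 ∂Q - 1 := by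
    simp [variance_eq_sub hwL2, hwmean]
  have hint_gw := integrable_sq_sum_div_sub hYQ hgwL2 N (∫ z, g z * w z ∂Q)
  have hint_w := integrable_sq_sum_div_sub hYQ hwL2 N 1
  have hmse_gw : ∫ ω, ((∑ i, g (Y i ω) * w (Y i ω)) / N - ∫ z, g z * w z ∂Q) ^ 2 ∂μ
      = Var[fun z => g z * w z; Q] / N := by
    simpa using integral_sq_sum_div_card_sub_integral (φ := fun z => g z * w z) hYQ hiid
      (hg.mul hw) hgwL2
  have hmse_w : ∫ ω, ((∑ i, w (Y i ω)) / N - 1) ^ 2 ∂μ = Var[w; Q] / N := by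
    simpa [hwmean] using integral_sq_sum_div_card_sub_integral hYQ hiid hw hwL2
  calc _ ≤ ∫ ω, (2 * ((∑ i, g (Y i ω) * w (Y i ω)) / N - ∫ z, g z * w z ∂Q) ^ 2
          + 2 * G ^ 2 * ((∑ i, w (Y i ω)) / N - 1) ^ 2) ∂μ :=
        integral_mono_of_nonneg (.of_forall fun ω => sq_nonneg _)
          ((hint_gw.const_mul 2).add (hint_w.const_mul _))
          (.of_forall fun ω => sq_sum_div_sum_mul_sub_le _ (fun i _ => hw0 _) (fun i _ => hG _)
            hG0 (Nat.cast_ne_zero.mpr hN.ne') _)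
    _ = 2 * (Var[fun z => g z * w z; Q] / N) + 2 * G ^ 2 * (Var[w; Q] / N) := by
        rw [integral_add (hint_gw.const_mul 2) (hint_w.const_mul _), integral_const_mul,
          integral_const_mul, hmse_gw, hmse_w]
    _ ≤ 2 * (G ^ 2 * (∫ z, w z ^ 2 ∂Q) / N) + 2 * G ^ 2 * (Var[w; Q] / N) := by
        gcongr; exact variance_mul_le_of_abs_le hg hG hwL2
    _ = _ := by rw [hvar_w]; ring
end

section
/- For the Pólya-Gamma Gibbs sampler for Bayesian logistic regression with prior covariance Σ, the β-marginal chain satisfies the one-step drift E[‖β_1‖₂² + 1 | β_0 = β] ≤ 1 + ‖Σ‖₂² ‖Xᵀ(Y - (1/2)1_n)‖₂² + tr(Σ) for every β ∈ ℝ^d, where conditionally β_1 | ω ~ N(μ(ω), Σ(ω)) with Σ(ω) = (XᵀΩX + Σ⁻¹)⁻¹, μ(ω) = Σ(ω) Xᵀ(Y - (1/2)1_n), Ω = diag(ω), ω having arbitrary distribution supported on (0,∞)^n given β. -/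
open MeasureTheory ProbabilityTheory Matrix
open scoped Matrix.Norms.L2Operator MatrixOrder ComplexOrder

/-!
Matrix inversion reverses the Loewner order on positive definite matrices, so the conditional
covariance `(XᵀΩX + Σ⁻¹)⁻¹` lies below `Σ`. Hence its trace is at most `tr Σ` and its operator
norm at most `‖Σ‖`, which bounds the conditional second moment `‖μ(ω)‖² + tr Σ(ω)` uniformly
in `ω`; integrating the conditional expectation gives the drift bound.
-/

namespace Matrix

theorem sum_sq_mulVec_le {m n : Type*} [Fintype m] [Fintype n] [DecidableEq n]
    (A : Matrix m n ℝ) (v : n → ℝ) :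
    ∑ i, (A *ᵥ v) i ^ 2 ≤ ‖A‖ ^ 2 * ∑ j, v j ^ 2 := by
  have hop := A.l2_opNorm_mulVec (WithLp.toLp 2 v)
  rw [← sq_le_sq₀ (norm_nonneg _) (by positivity), mul_pow] at hop
  simpa [EuclideanSpace.norm_sq_eq] using hop

variable {𝕜 n : Type*} [RCLike 𝕜] [Fintype n]

theorem trace_mono : Monotone (trace : Matrix n n 𝕜 → 𝕜) :=
  OrderHomClass.mono (tracePositiveLinearMap n ℝ 𝕜)

variable [DecidableEq n]

theorem PosDef.inv_le_inv {P Q : Matrix n n 𝕜} (hP : P.PosDef) (hQ : Q.PosDef) (h : Q ≤ P) :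
    P⁻¹ ≤ Q⁻¹ := by
  -- `[[P, 1], [1, Q⁻¹]]` has Schur complement `P - Q` w.r.t. `Q⁻¹` and `Q⁻¹ - P⁻¹` w.r.t. `P`.
  have := hP.isUnit.invertible
  have := hQ.isUnit.invertible
  have := hQ.inv.isUnit.invertible
  have hblock : (fromBlocks P 1 1ᴴ Q⁻¹).PosSemidef := by
    rw [PosDef.fromBlocks₂₂ _ _ hQ.inv]
    simpa [inv_inv_of_invertible] using le_iff.mp h
  rw [PosDef.fromBlocks₁₁ _ _ hP] at hblock
  simpa [le_iff] using hblock

theorem inv_add_inv_le {A S : Matrix n n 𝕜} (hA : A.PosSemidef) (hS : S.PosDef) :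
    (A + S⁻¹)⁻¹ ≤ S := by
  have := hS.isUnit.invertible
  simpa [inv_inv_of_invertible] using
    (PosDef.posSemidef_add hA hS.inv).inv_le_inv hS.inv (le_add_of_nonneg_left hA.nonneg)

theorem rayleighQuotient_toEuclideanCLM_nonneg {A : Matrix n n 𝕜} (hA : 0 ≤ A)
    (x : EuclideanSpace 𝕜 n) : 0 ≤ (toEuclideanCLM (n := n) (𝕜 := 𝕜) A).rayleighQuotient x := by
  have hpos : (toEuclideanLin A).IsPositive := isPositive_toEuclideanLin_iff.mpr hA.posSemidef
  exact div_nonneg (hpos.re_inner_nonneg_left x) (by positivity)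

theorem l2_opNorm_le_of_nonneg_of_le {A B : Matrix n n 𝕜} (hA : 0 ≤ A) (hAB : A ≤ B) :
    ‖A‖ ≤ ‖B‖ := by
  set T := toEuclideanCLM (n := n) (𝕜 := 𝕜)
  have hsymm : (T A).IsSymmetric := isSymmetric_toEuclideanLin_iff.mpr hA.posSemidef.isHermitian
  change ‖T A‖ ≤ ‖T B‖
  rw [(T A).norm_eq_iSup_rayleighQuotient hsymm]
  refine ciSup_le fun x => ?_
  have hsplit : (T B).rayleighQuotient x
      = (T A).rayleighQuotient x + (T (B - A)).rayleighQuotient x := by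
    rw [map_sub, ← ContinuousLinearMap.rayleighQuotient_add, add_sub_cancel]
  calc |(T A).rayleighQuotient x| = (T A).rayleighQuotient x :=
        abs_of_nonneg (rayleighQuotient_toEuclideanCLM_nonneg hA x)
    _ ≤ (T B).rayleighQuotient x := by
        linarith [rayleighQuotient_toEuclideanCLM_nonneg (sub_nonneg.mpr hAB) x]
    _ ≤ ‖T B‖ := (le_abs_self _).trans ((T B).rayleighQuotient_le_norm x)

theorem sum_sq_inv_add_inv_mulVec_add_trace_le {A S : Matrix n n ℝ} (hA : A.PosSemidef)
    (hS : S.PosDef) (v : n → ℝ) :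
    ∑ j, ((A + S⁻¹)⁻¹ *ᵥ v) j ^ 2 + (A + S⁻¹)⁻¹.trace ≤ ‖S‖ ^ 2 * ∑ j, v j ^ 2 + S.trace := by
  have hcov := inv_add_inv_le hA hS
  have hnorm : ‖(A + S⁻¹)⁻¹‖ ≤ ‖S‖ :=
    l2_opNorm_le_of_nonneg_of_le (PosDef.posSemidef_add hA hS.inv).inv.posSemidef.nonneg hcov
  grw [sum_sq_mulVec_le, hnorm, trace_mono hcov]

end Matrix

theorem MeasureTheory.integral_le_of_condExp_ae_le {Ω : Type*} {m m₀ : MeasurableSpace Ω}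
    {μ : Measure Ω} [IsProbabilityMeasure μ] (hm : m ≤ m₀) {f : Ω → ℝ} {C : ℝ}
    (h : μ[f | m] ≤ᵐ[μ] fun _ => C) : ∫ ω, f ω ∂μ ≤ C := by
  rw [← integral_condExp hm]
  simpa using integral_mono_ae integrable_condExp (integrable_const C) h

theorem polya_gamma_one_step_drift_general
    (n d : ℕ) {Ω : Type*} [MeasurableSpace Ω] (μ : Measure Ω) [IsProbabilityMeasure μ]
    (S : Matrix (Fin d) (Fin d) ℝ) (hS : S.PosDef)
    (X : Matrix (Fin n) (Fin d) ℝ) (Y : Fin n → ℝ)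
    (w : Ω → Fin n → ℝ) (hwm : Measurable w) (hw : ∀ᵐ ω' ∂μ, ∀ i, 0 < w ω' i)
    (β1 : Ω → Fin d → ℝ)
    (hβ1int : Integrable (fun ω' => ∑ j, (β1 ω' j) ^ 2) μ)
    (hcondmoment :
      μ[fun ω' => ∑ j, (β1 ω' j) ^ 2 | MeasurableSpace.comap w inferInstance]
        =ᵐ[μ] fun ω' =>
          (∑ j, (((Xᵀ * Matrix.diagonal (w ω') * X + S⁻¹)⁻¹).mulVec
              (Xᵀ.mulVec (fun i => Y i - 1/2)) j) ^ 2)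
            + ((Xᵀ * Matrix.diagonal (w ω') * X + S⁻¹)⁻¹).trace) :
    ∫ ω', ((∑ j, (β1 ω' j) ^ 2) + 1) ∂μ
      ≤ 1 + ‖S‖ ^ 2 * (∑ j, (Xᵀ.mulVec (fun i => Y i - 1/2) j) ^ 2) + S.trace := by
  have hgram : ∀ᵐ ω' ∂μ, (Xᵀ * diagonal (w ω') * X).PosSemidef := by
    filter_upwards [hw] with ω' hω'
    simpa using (PosSemidef.diagonal fun i => (hω' i).le).conjTranspose_mul_mul_same X
  have hmoment : ∫ ω', ∑ j, β1 ω' j ^ 2 ∂μ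
      ≤ ‖S‖ ^ 2 * ∑ j, (Xᵀ *ᵥ fun i => Y i - 1/2) j ^ 2 + S.trace := by
    refine integral_le_of_condExp_ae_le hwm.comap_le (hcondmoment.trans_le ?_)
    filter_upwards [hgram] with ω' hA
    exact sum_sq_inv_add_inv_mulVec_add_trace_le hA hS _
  rw [integral_add hβ1int (integrable_const 1), integral_const, probReal_univ, one_smul]
  linarith

/-- One-step drift for the β-marginal of the Pólya-Gamma Gibbs sampler: if, given the
auxiliary variables `w` (positive coordinates), `β₁` has conditional second moment
`E[‖β₁‖² | w] = ‖μ(w)‖² + tr(Σ(w))` with `Σ(w) = (Xᵀ diag(w) X + Σ⁻¹)⁻¹` and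
`μ(w) = Σ(w) Xᵀ(Y - ½1)`, then
`E[‖β₁‖² + 1] ≤ 1 + ‖Σ‖₂² ‖Xᵀ(Y - ½1)‖₂² + tr(Σ)`. -/
theorem polya_gamma_one_step_drift
    (n d : ℕ) {Ω : Type*} [MeasurableSpace Ω] (μ : Measure Ω) [IsProbabilityMeasure μ]
    (S : Matrix (Fin d) (Fin d) ℝ) (hS : S.PosDef)
    (X : Matrix (Fin n) (Fin d) ℝ) (Y : Fin n → ℝ) (hY : ∀ i, Y i = 0 ∨ Y i = 1)
    (w : Ω → Fin n → ℝ) (hwm : Measurable w) (hw : ∀ᵐ ω' ∂μ, ∀ i, 0 < w ω' i)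
    (β1 : Ω → Fin d → ℝ) (hβ1m : Measurable β1)
    (hβ1int : Integrable (fun ω' => ∑ j, (β1 ω' j) ^ 2) μ)
    (hcondmoment :
      μ[fun ω' => ∑ j, (β1 ω' j) ^ 2 | MeasurableSpace.comap w inferInstance]
        =ᵐ[μ] fun ω' =>
          (∑ j, (((Xᵀ * Matrix.diagonal (w ω') * X + S⁻¹)⁻¹).mulVec
              (Xᵀ.mulVec (fun i => Y i - 1/2)) j) ^ 2)
            + ((Xᵀ * Matrix.diagonal (w ω') * X + S⁻¹)⁻¹).trace) :
    ∫ ω', ((∑ j, (β1 ω' j) ^ 2) + 1) ∂μ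
      ≤ 1 + ‖S‖ ^ 2 * (∑ j, (Xᵀ.mulVec (fun i => Y i - 1/2) j) ^ 2) + S.trace :=
  polya_gamma_one_step_drift_general n d μ S hS X Y w hwm hw β1 hβ1int hcondmoment
end
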